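/- The magic capacity is additive under tensor products: C_M(|ψ⟩ ⊗ |φ⟩) = C_M(|ψ⟩) + C_M(|φ⟩). In particular, for a product of N copies of a single-qubit state |Θ⟩, C_M(|Θ⟩^⊗N) = N · C_M(|Θ⟩). -/
import Mathlib


open Matrix BigOperators
open scoped ComplexOrder

/-- The four single-qubit Pauli matrices `I, σx, σy, σz`. -/
noncomputable def pauli : Fin 4 → Matrix (Fin 2) (Fin 2) ℂ :=
  ![1, !![0, 1; 1, 0], !![0, -Complex.I; Complex.I, 0], !![1, 0; 0, -1]]

/-- The `N`-qubit Pauli string `⊗_k σ_{s k}` as a matrix on `(ℂ²)^⊗N`. -/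
noncomputable def PauliString {N : ℕ} (s : Fin N → Fin 4) :
    Matrix (Fin N → Fin 2) (Fin N → Fin 2) ℂ :=
  Matrix.of fun i j => ∏ k, pauli (s k) (i k) (j k)

/-- The Pauli expectation value `⟨ψ|P|ψ⟩` (a real number since `P` is Hermitian). -/
noncomputable def expec {N : ℕ} (ψ : (Fin N → Fin 2) → ℂ) (s : Fin N → Fin 4) : ℝ :=
  (star ψ ⬝ᵥ PauliString s *ᵥ ψ).re

/-- The magic capacity `C_M(|ψ⟩) = Var_{P∼p}(ln ⟨ψ|P|ψ⟩²)` with `p(P) = 2^{-N}⟨ψ|P|ψ⟩²`. -/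
noncomputable def magicCapacity {N : ℕ} (ψ : (Fin N → Fin 2) → ℂ) : ℝ :=
  (2 : ℝ) ^ (-(N : ℤ)) *
      ∑ s : Fin N → Fin 4, expec ψ s ^ 2 * Real.log (expec ψ s ^ 2) ^ 2
    - ((2 : ℝ) ^ (-(N : ℤ)) *
        ∑ s : Fin N → Fin 4, expec ψ s ^ 2 * Real.log (expec ψ s ^ 2)) ^ 2

/-- The tensor product state `|ψ⟩ ⊗ |φ⟩` on `N + M` qubits. -/
noncomputable def tensorVec {N M : ℕ} (ψ : (Fin N → Fin 2) → ℂ)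
    (φ : (Fin M → Fin 2) → ℂ) : (Fin (N + M) → Fin 2) → ℂ :=
  fun i => ψ (fun k => i (Fin.castAdd M k)) * φ (fun k => i (Fin.natAdd N k))

/-- The `N`-fold tensor power `|Θ⟩^{⊗N}` of a single-qubit state. -/
noncomputable def prodState (Θ : (Fin 1 → Fin 2) → ℂ) (N : ℕ) :
    (Fin N → Fin 2) → ℂ :=
  fun i => ∏ k : Fin N, Θ (fun _ => i k)

/-! ### Auxiliary lemmas -/

lemma pauli_conj (a : Fin 4) (i j : Fin 2) : star (pauli a j i) = pauli a i j := by
  fin_cases a <;> fin_cases i <;> fin_cases j <;> simp [pauli, Matrix.one_apply]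

lemma pauli_complete (i j k l : Fin 2) :
    ∑ a : Fin 4, pauli a i j * pauli a k l = if i = l ∧ j = k then 2 else 0 := by
  fin_cases i <;> fin_cases j <;> fin_cases k <;> fin_cases l <;>
    simp [pauli, Fin.sum_univ_four, Matrix.one_apply] <;> ring_nf

lemma pauliString_conj {N : ℕ} (s : Fin N → Fin 4) (i j : Fin N → Fin 2) :
    star (PauliString s j i) = PauliString s i j := by
  simp only [PauliString, Matrix.of_apply, star_prod]
  exact Finset.prod_congr rfl fun k _ => pauli_conj (s k) (i k) (j k)

lemma pauliString_complete {N : ℕ} (i j k l : Fin N → Fin 2) :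
    ∑ s : Fin N → Fin 4, PauliString s i j * PauliString s k l =
      if i = l ∧ j = k then (2 : ℂ) ^ N else 0 := by
  have h : ∀ s : Fin N → Fin 4, PauliString s i j * PauliString s k l =
      ∏ m : Fin N, (pauli (s m) (i m) (j m) * pauli (s m) (k m) (l m)) := by
    intro s; simp [PauliString, Finset.prod_mul_distrib]
  have key : (∏ m : Fin N, ∑ a : Fin 4, pauli a (i m) (j m) * pauli a (k m) (l m))
      = ∑ s : Fin N → Fin 4, ∏ m : Fin N,
          (pauli (s m) (i m) (j m) * pauli (s m) (k m) (l m)) := by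
    rw [Finset.prod_univ_sum, Fintype.piFinset_univ]
  simp only [h, ← key, pauli_complete]
  by_cases hc : i = l ∧ j = k
  · simp [hc.1, hc.2]
  · rw [if_neg hc]
    have : ∃ m, ¬(i m = l m ∧ j m = k m) := by
      by_contra hall
      push_neg at hall
      exact hc ⟨funext fun m => ((hall m).1), funext fun m => ((hall m).2)⟩
    obtain ⟨m, hm⟩ := this
    exact Finset.prod_eq_zero (Finset.mem_univ m) (by rw [if_neg hm])

lemma quad_expand {N : ℕ} (ψ : (Fin N → Fin 2) → ℂ)
    (A : Matrix (Fin N → Fin 2) (Fin N → Fin 2) ℂ) :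
    star ψ ⬝ᵥ A *ᵥ ψ = ∑ i, ∑ j, star (ψ i) * A i j * ψ j := by
  simp only [dotProduct, mulVec, Pi.star_apply, Finset.mul_sum]
  exact Finset.sum_congr rfl fun i _ => Finset.sum_congr rfl fun j _ => by ring

lemma quad_real {N : ℕ} (ψ : (Fin N → Fin 2) → ℂ) (s : Fin N → Fin 4) :
    star ψ ⬝ᵥ PauliString s *ᵥ ψ = (expec ψ s : ℂ) := by
  have h : star (star ψ ⬝ᵥ PauliString s *ᵥ ψ) = star ψ ⬝ᵥ PauliString s *ᵥ ψ := by
    rw [quad_expand]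
    simp only [star_sum, star_mul', star_star]
    rw [Finset.sum_comm]
    refine Finset.sum_congr rfl fun i _ => Finset.sum_congr rfl fun j _ => ?_
    rw [pauliString_conj]
    ring
  exact (Complex.conj_eq_iff_re.mp h).symm

def appendEquiv (N M : ℕ) (X : Type*) : ((Fin N → X) × (Fin M → X)) ≃ (Fin (N + M) → X) where
  toFun p := Fin.append p.1 p.2
  invFun f := (fun k => f (Fin.castAdd M k), fun k => f (Fin.natAdd N k))
  left_inv p := by
    ext k
    · exact Fin.append_left _ _ _
    · exact Fin.append_right _ _ _
  right_inv f := by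
    funext i
    refine Fin.addCases (fun k => ?_) (fun k => ?_) i
    · exact Fin.append_left _ _ _
    · exact Fin.append_right _ _ _

lemma sum_append {N M : ℕ} {X : Type*} {A : Type*} [AddCommMonoid A] [Fintype X]
    [DecidableEq X] (f : (Fin (N + M) → X) → A) :
    ∑ i : Fin (N + M) → X, f i =
      ∑ i1 : Fin N → X, ∑ i2 : Fin M → X, f (Fin.append i1 i2) := by
  rw [← (appendEquiv N M X).sum_comp f, Fintype.sum_prod_type]
  rfl

lemma tensor_apply {N M : ℕ} (ψ : (Fin N → Fin 2) → ℂ) (φ : (Fin M → Fin 2) → ℂ)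
    (i1 : Fin N → Fin 2) (i2 : Fin M → Fin 2) :
    tensorVec ψ φ (Fin.append i1 i2) = ψ i1 * φ i2 := by
  simp [tensorVec, Fin.append_left, Fin.append_right]

lemma pauliString_append {N M : ℕ} (s1 : Fin N → Fin 4) (s2 : Fin M → Fin 4)
    (i1 j1 : Fin N → Fin 2) (i2 j2 : Fin M → Fin 2) :
    PauliString (Fin.append s1 s2) (Fin.append i1 i2) (Fin.append j1 j2) =
      PauliString s1 i1 j1 * PauliString s2 i2 j2 := by
  simp only [PauliString, Matrix.of_apply]
  rw [Fin.prod_univ_add]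
  simp [Fin.append_left, Fin.append_right]

lemma quad_tensor {N M : ℕ} (ψ : (Fin N → Fin 2) → ℂ) (φ : (Fin M → Fin 2) → ℂ)
    (s1 : Fin N → Fin 4) (s2 : Fin M → Fin 4) :
    star (tensorVec ψ φ) ⬝ᵥ PauliString (Fin.append s1 s2) *ᵥ tensorVec ψ φ =
      (star ψ ⬝ᵥ PauliString s1 *ᵥ ψ) * (star φ ⬝ᵥ PauliString s2 *ᵥ φ) := by
  rw [quad_expand, quad_expand, quad_expand]
  simp only [sum_append]
  rw [Finset.sum_mul_sum]
  refine Finset.sum_congr rfl fun i1 _ => Finset.sum_congr rfl fun i2 _ => ?_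
  rw [Finset.sum_mul_sum]
  refine Finset.sum_congr rfl fun j1 _ => Finset.sum_congr rfl fun j2 _ => ?_
  simp only [Pi.star_apply, tensor_apply, pauliString_append, star_mul']
  ring

lemma norm_tensor {N M : ℕ} (ψ : (Fin N → Fin 2) → ℂ) (φ : (Fin M → Fin 2) → ℂ) :
    star (tensorVec ψ φ) ⬝ᵥ tensorVec ψ φ = (star ψ ⬝ᵥ ψ) * (star φ ⬝ᵥ φ) := by
  simp only [dotProduct, Pi.star_apply]
  rw [sum_append (fun i => star (tensorVec ψ φ i) * tensorVec ψ φ i), Finset.sum_mul_sum]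
  refine Finset.sum_congr rfl fun i1 _ => Finset.sum_congr rfl fun i2 _ => ?_
  simp only [tensor_apply, star_mul']
  ring

lemma expec_tensor {N M : ℕ} (ψ : (Fin N → Fin 2) → ℂ) (φ : (Fin M → Fin 2) → ℂ)
    (s1 : Fin N → Fin 4) (s2 : Fin M → Fin 4) :
    expec (tensorVec ψ φ) (Fin.append s1 s2) = expec ψ s1 * expec φ s2 := by
  have h := quad_tensor ψ φ s1 s2
  rw [quad_real, quad_real, quad_real] at h
  exact_mod_cast h

lemma sum_sq {N : ℕ} (ψ : (Fin N → Fin 2) → ℂ) (h : star ψ ⬝ᵥ ψ = 1) :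
    ∑ s : Fin N → Fin 4, expec ψ s ^ 2 = 2 ^ N := by
  have hC : ∑ s : Fin N → Fin 4, (star ψ ⬝ᵥ PauliString s *ᵥ ψ) ^ 2 = (2 : ℂ) ^ N := by
    have hq : ∀ s : Fin N → Fin 4, star ψ ⬝ᵥ PauliString s *ᵥ ψ =
        ∑ p : (Fin N → Fin 2) × (Fin N → Fin 2),
          star (ψ p.1) * PauliString s p.1 p.2 * ψ p.2 := by
      intro s; rw [quad_expand, Fintype.sum_prod_type]
    simp only [hq, sq, Finset.sum_mul_sum]
    rw [Finset.sum_comm]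
    have step : ∀ p : (Fin N → Fin 2) × (Fin N → Fin 2),
        (∑ s : Fin N → Fin 4, ∑ q : (Fin N → Fin 2) × (Fin N → Fin 2),
          (star (ψ p.1) * PauliString s p.1 p.2 * ψ p.2) *
          (star (ψ q.1) * PauliString s q.1 q.2 * ψ q.2)) =
        star (ψ p.1) * ψ p.2 * star (ψ p.2) * ψ p.1 * (2 : ℂ) ^ N := by
      intro p
      rw [Finset.sum_comm]
      have collapse : ∀ q : (Fin N → Fin 2) × (Fin N → Fin 2),
          (∑ s : Fin N → Fin 4,
            (star (ψ p.1) * PauliString s p.1 p.2 * ψ p.2) *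
            (star (ψ q.1) * PauliString s q.1 q.2 * ψ q.2)) =
          (star (ψ p.1) * ψ p.2 * star (ψ q.1) * ψ q.2) *
            (if p.1 = q.2 ∧ p.2 = q.1 then (2 : ℂ) ^ N else 0) := by
        intro q
        rw [← pauliString_complete p.1 p.2 q.1 q.2, Finset.mul_sum]
        exact Finset.sum_congr rfl fun s _ => by ring
      simp only [collapse, mul_ite, mul_zero, Fintype.sum_prod_type, ite_and]
      simp [Finset.sum_ite_eq, Finset.sum_ite_eq']
    simp only [step]
    have : ∑ p : (Fin N → Fin 2) × (Fin N → Fin 2),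
        star (ψ p.1) * ψ p.2 * star (ψ p.2) * ψ p.1 * (2 : ℂ) ^ N =
        (star ψ ⬝ᵥ ψ) * (star ψ ⬝ᵥ ψ) * 2 ^ N := by
      rw [Fintype.sum_prod_type]
      simp only [dotProduct, Pi.star_apply, Finset.sum_mul_sum, Finset.sum_mul, Finset.mul_sum]
      exact Finset.sum_congr rfl fun a _ => Finset.sum_congr rfl fun b _ => by ring
    rw [this, h]; ring
  have : ((∑ s : Fin N → Fin 4, expec ψ s ^ 2 : ℝ) : ℂ) = ((2 : ℝ) ^ N : ℂ) := by
    push_cast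
    simp only [← quad_real]
    rw [hC]
  exact_mod_cast this

lemma logmul1 (u v : ℝ) : u * v * Real.log (u * v) = u * v * (Real.log u + Real.log v) := by
  rcases eq_or_ne u 0 with hu | hu
  · simp [hu]
  rcases eq_or_ne v 0 with hv | hv
  · simp [hv]
  rw [Real.log_mul hu hv]

lemma logmul2 (u v : ℝ) :
    u * v * Real.log (u * v) ^ 2 = u * v * (Real.log u + Real.log v) ^ 2 := by
  rcases eq_or_ne u 0 with hu | hu
  · simp [hu]
  rcases eq_or_ne v 0 with hv | hv
  · simp [hv]
  rw [Real.log_mul hu hv]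

lemma sum_helper1 {α β : Type*} [Fintype α] [Fintype β] (u L : α → ℝ) (v K : β → ℝ) :
    ∑ a, ∑ b, u a * v b * (L a + K b) =
      (∑ a, u a * L a) * (∑ b, v b) + (∑ a, u a) * (∑ b, v b * K b) := by
  rw [Finset.sum_mul_sum, Finset.sum_mul_sum, ← Finset.sum_add_distrib]
  refine Finset.sum_congr rfl fun a _ => ?_
  rw [← Finset.sum_add_distrib]
  exact Finset.sum_congr rfl fun b _ => by ring

lemma sum_helper2 {α β : Type*} [Fintype α] [Fintype β] (u L : α → ℝ) (v K : β → ℝ) :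
    ∑ a, ∑ b, u a * v b * (L a + K b) ^ 2 =
      (∑ a, u a * L a ^ 2) * (∑ b, v b)
        + 2 * ((∑ a, u a * L a) * (∑ b, v b * K b))
        + (∑ a, u a) * (∑ b, v b * K b ^ 2) := by
  rw [Finset.sum_mul_sum, Finset.sum_mul_sum, Finset.sum_mul_sum, Finset.mul_sum,
    ← Finset.sum_add_distrib, ← Finset.sum_add_distrib]
  refine Finset.sum_congr rfl fun a _ => ?_
  rw [Finset.mul_sum, ← Finset.sum_add_distrib, ← Finset.sum_add_distrib]
  exact Finset.sum_congr rfl fun b _ => by ring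

lemma magic_tensor {N M : ℕ} (ψ : (Fin N → Fin 2) → ℂ) (φ : (Fin M → Fin 2) → ℂ)
    (hψ : star ψ ⬝ᵥ ψ = 1) (hφ : star φ ⬝ᵥ φ = 1) :
    magicCapacity (tensorVec ψ φ) = magicCapacity ψ + magicCapacity φ := by
  have hE : ∀ (s1 : Fin N → Fin 4) (s2 : Fin M → Fin 4),
      expec (tensorVec ψ φ) (Fin.append s1 s2) ^ 2 = expec ψ s1 ^ 2 * expec φ s2 ^ 2 := by
    intro s1 s2; rw [expec_tensor]; ring
  have key2 : ∑ s : Fin (N + M) → Fin 4,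
      expec (tensorVec ψ φ) s ^ 2 * Real.log (expec (tensorVec ψ φ) s ^ 2) ^ 2
      = (∑ s : Fin N → Fin 4, expec ψ s ^ 2 * Real.log (expec ψ s ^ 2) ^ 2) * 2 ^ M
        + 2 * ((∑ s : Fin N → Fin 4, expec ψ s ^ 2 * Real.log (expec ψ s ^ 2)) *
            (∑ t : Fin M → Fin 4, expec φ t ^ 2 * Real.log (expec φ t ^ 2)))
        + 2 ^ N * (∑ t : Fin M → Fin 4, expec φ t ^ 2 * Real.log (expec φ t ^ 2) ^ 2) := by
    rw [sum_append (fun s =>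
      expec (tensorVec ψ φ) s ^ 2 * Real.log (expec (tensorVec ψ φ) s ^ 2) ^ 2)]
    simp only [hE, logmul2]
    rw [sum_helper2, sum_sq ψ hψ, sum_sq φ hφ]
  have key1 : ∑ s : Fin (N + M) → Fin 4,
      expec (tensorVec ψ φ) s ^ 2 * Real.log (expec (tensorVec ψ φ) s ^ 2)
      = (∑ s : Fin N → Fin 4, expec ψ s ^ 2 * Real.log (expec ψ s ^ 2)) * 2 ^ M
        + 2 ^ N * (∑ t : Fin M → Fin 4, expec φ t ^ 2 * Real.log (expec φ t ^ 2)) := by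
    rw [sum_append (fun s =>
      expec (tensorVec ψ φ) s ^ 2 * Real.log (expec (tensorVec ψ φ) s ^ 2))]
    simp only [hE, logmul1]
    rw [sum_helper1, sum_sq ψ hψ, sum_sq φ hφ]
  simp only [magicCapacity]
  rw [key1, key2]
  have hxy : (2 : ℝ) ^ (-((N + M : ℕ) : ℤ)) = ((2 : ℝ) ^ N)⁻¹ * ((2 : ℝ) ^ M)⁻¹ := by
    push_cast
    rw [neg_add, zpow_add₀ (by norm_num : (2:ℝ) ≠ 0), _root_.zpow_neg, _root_.zpow_neg,
      zpow_natCast, zpow_natCast]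
  have hx : (2 : ℝ) ^ (-(N : ℤ)) = ((2 : ℝ) ^ N)⁻¹ := by
    rw [_root_.zpow_neg, zpow_natCast]
  have hy : (2 : ℝ) ^ (-(M : ℤ)) = ((2 : ℝ) ^ M)⁻¹ := by
    rw [_root_.zpow_neg, zpow_natCast]
  rw [hxy, hx, hy]
  have hN : ((2 : ℝ) ^ N) ≠ 0 := by positivity
  have hM : ((2 : ℝ) ^ M) ≠ 0 := by positivity
  field_simp
  ring

lemma prod_succ (Θ : (Fin 1 → Fin 2) → ℂ) (N : ℕ) :
    prodState Θ (N + 1) = tensorVec (prodState Θ N) Θ := by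
  funext i
  have h1 : ∀ k : Fin 1, Fin.natAdd N k = Fin.last N := by
    intro k
    refine Fin.ext ?_
    have := k.isLt
    show N + (k : ℕ) = N
    omega
  show ∏ k : Fin (N + 1), Θ (fun _ => i k) =
      (∏ k : Fin N, Θ (fun _ => i (Fin.castAdd 1 k))) * Θ (fun k => i (Fin.natAdd N k))
  rw [Fin.prod_univ_castSucc]
  congr 1
  exact congrArg Θ (funext fun k => (congrArg i (h1 k)).symm)

lemma normProdState (Θ : (Fin 1 → Fin 2) → ℂ) (hΘ : star Θ ⬝ᵥ Θ = 1) (N : ℕ) :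
    star (prodState Θ N) ⬝ᵥ prodState Θ N = 1 := by
  induction N with
  | zero =>
    simp [dotProduct, prodState]
  | succ n ih =>
    rw [prod_succ, norm_tensor, ih, hΘ, one_mul]

lemma magic_prod_zero (Θ : (Fin 1 → Fin 2) → ℂ) :
    magicCapacity (prodState Θ 0) = 0 := by
  have he : ∀ s : Fin 0 → Fin 4, expec (prodState Θ 0) s = 1 := by
    intro s
    have : star (prodState Θ 0) ⬝ᵥ PauliString s *ᵥ prodState Θ 0 = 1 := by
      rw [quad_expand]
      simp [PauliString, prodState]
    simp [expec, this]
  simp [magicCapacity, he, Real.log_one]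

/-- The magic capacity is additive under tensor products, and in particular
`C_M(|Θ⟩^{⊗N}) = N · C_M(|Θ⟩)` for products of single-qubit states. -/
theorem magicCapacity_additive :
    (∀ (N M : ℕ) (ψ : (Fin N → Fin 2) → ℂ) (φ : (Fin M → Fin 2) → ℂ),
      star ψ ⬝ᵥ ψ = 1 → star φ ⬝ᵥ φ = 1 →
      magicCapacity (tensorVec ψ φ) = magicCapacity ψ + magicCapacity φ) ∧
    (∀ (N : ℕ) (Θ : (Fin 1 → Fin 2) → ℂ), star Θ ⬝ᵥ Θ = 1 →
      magicCapacity (prodState Θ N) = N * magicCapacity Θ) := by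
  constructor
  · exact fun N M ψ φ hψ hφ => magic_tensor ψ φ hψ hφ
  · intro N Θ hΘ
    induction N with
    | zero => simp [magic_prod_zero]
    | succ n ih =>
      rw [prod_succ, magic_tensor (prodState Θ n) Θ (normProdState Θ hΘ n) hΘ, ih]
      push_cast
      ring
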